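/- arXiv:1710.08388 — 2 statements merged into one kernel-verified Lean document; each statement's English description precedes it below -/
import Mathlib

section
/- For C ∈ S₂(H₁ ⊗ H₂) and nonzero C₁ ∈ S₂(H₁), the minimal squared distance inf over C₂ ∈ S₂(H₂) of ‖C − C₁ ⊗̃ C₂‖₂² equals D(C₁) = ‖C‖₂² − ‖T₁(C, C₁)‖₂² / ‖C₁‖₂². -/
open scoped InnerProductSpace
noncomputable section

/-- Hilbert–Schmidt inner product of two operators with respect to a Hilbert basis. -/
def hsInner {ι E : Type*} [NormedAddCommGroup E] [InnerProductSpace ℝ E]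
    (b : HilbertBasis ι ℝ E) (A B : E →L[ℝ] E) : ℝ :=
  ∑' i, ⟪A (b i), B (b i)⟫_ℝ

/-- Hilbert–Schmidt norm. -/
def hsNorm {ι E : Type*} [NormedAddCommGroup E] [InnerProductSpace ℝ E]
    (b : HilbertBasis ι ℝ E) (A : E →L[ℝ] E) : ℝ :=
  Real.sqrt (hsInner b A A)

/-- Being a Hilbert–Schmidt operator. -/
def IsHS {ι E : Type*} [NormedAddCommGroup E] [InnerProductSpace ℝ E]
    (b : HilbertBasis ι ℝ E) (A : E →L[ℝ] E) : Prop :=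
  Summable fun i => ‖A (b i)‖ ^ 2

/-- A realization of the Hilbert space `H` as the Hilbert tensor product `H₁ ⊗ H₂`,
together with the operator tensor product `⊗̃`: `tmul` is bilinear with
`⟪u ⊗ v, w ⊗ z⟫ = ⟪u,w⟫⟪v,z⟫`, elementary tensors span a dense subspace, and
`otimes C₁ C₂` is the bounded operator with `(C₁ ⊗̃ C₂)(u ⊗ v) = C₁ u ⊗ C₂ v`. -/
structure HilbertTensorProduct (H₁ H₂ H : Type*) [NormedAddCommGroup H₁]
    [InnerProductSpace ℝ H₁] [NormedAddCommGroup H₂] [InnerProductSpace ℝ H₂]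
    [NormedAddCommGroup H] [InnerProductSpace ℝ H] : Type _ where
  tmul : H₁ →ₗ[ℝ] H₂ →ₗ[ℝ] H
  inner_tmul : ∀ (u w : H₁) (v z : H₂),
    ⟪tmul u v, tmul w z⟫_ℝ = ⟪u, w⟫_ℝ * ⟪v, z⟫_ℝ
  dense_span : (Submodule.span ℝ
    (Set.range fun p : H₁ × H₂ => tmul p.1 p.2)).topologicalClosure = ⊤
  otimes : (H₁ →L[ℝ] H₁) → (H₂ →L[ℝ] H₂) → (H →L[ℝ] H)
  otimes_tmul : ∀ (C₁ : H₁ →L[ℝ] H₁) (C₂ : H₂ →L[ℝ] H₂) (u : H₁) (v : H₂),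
    otimes C₁ C₂ (tmul u v) = tmul (C₁ u) (C₂ v)

variable {ι₁ ι₂ κ H₁ H₂ H : Type*}
variable [NormedAddCommGroup H₁] [InnerProductSpace ℝ H₁] [CompleteSpace H₁]
variable [NormedAddCommGroup H₂] [InnerProductSpace ℝ H₂] [CompleteSpace H₂]
variable [NormedAddCommGroup H] [InnerProductSpace ℝ H] [CompleteSpace H]

/-- `T₁` is the partial-trace type map `S₂(H₁ ⊗ H₂) × S₂(H₁) → S₂(H₂)` determined by
`T₁(A ⊗̃ B, C₁) = ⟨A, C₁⟩ B`; it is characterized by mapping Hilbert–Schmidt operators to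
Hilbert–Schmidt operators and the duality identity `⟨B, T₁(C,C₁)⟩ = ⟨C, C₁ ⊗̃ B⟩`. -/
def IsT1 {ι₁ ι₂ κ H₁ H₂ H : Type*}
    [NormedAddCommGroup H₁] [InnerProductSpace ℝ H₁]
    [NormedAddCommGroup H₂] [InnerProductSpace ℝ H₂]
    [NormedAddCommGroup H] [InnerProductSpace ℝ H]
    (P : HilbertTensorProduct H₁ H₂ H)
    (b₁ : HilbertBasis ι₁ ℝ H₁) (b₂ : HilbertBasis ι₂ ℝ H₂) (b : HilbertBasis κ ℝ H)
    (T₁ : (H →L[ℝ] H) → (H₁ →L[ℝ] H₁) → (H₂ →L[ℝ] H₂)) : Prop :=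
  (∀ C C₁, IsHS b C → IsHS b₁ C₁ → IsHS b₂ (T₁ C C₁)) ∧
  (∀ C C₁ B, IsHS b C → IsHS b₁ C₁ → IsHS b₂ B →
      hsInner b₂ B (T₁ C C₁) = hsInner b C (P.otimes C₁ B))

/-- `T₂` is the map `S₂(H₁ ⊗ H₂) × S₂(H₂) → S₂(H₁)` determined by
`T₂(A ⊗̃ B, C₂) = ⟨B, C₂⟩ A`; characterized by `⟨A, T₂(C,C₂)⟩ = ⟨C, A ⊗̃ C₂⟩`. -/
def IsT2 {ι₁ ι₂ κ H₁ H₂ H : Type*}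
    [NormedAddCommGroup H₁] [InnerProductSpace ℝ H₁]
    [NormedAddCommGroup H₂] [InnerProductSpace ℝ H₂]
    [NormedAddCommGroup H] [InnerProductSpace ℝ H]
    (P : HilbertTensorProduct H₁ H₂ H)
    (b₁ : HilbertBasis ι₁ ℝ H₁) (b₂ : HilbertBasis ι₂ ℝ H₂) (b : HilbertBasis κ ℝ H)
    (T₂ : (H →L[ℝ] H) → (H₂ →L[ℝ] H₂) → (H₁ →L[ℝ] H₁)) : Prop :=
  (∀ C C₂, IsHS b C → IsHS b₂ C₂ → IsHS b₁ (T₂ C C₂)) ∧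
  (∀ C C₂ A, IsHS b C → IsHS b₂ C₂ → IsHS b₁ A →
      hsInner b₁ A (T₂ C C₂) = hsInner b C (P.otimes A C₂))


/-! ### Auxiliary lemmas -/

section HSBasic

variable {ι E : Type*} [NormedAddCommGroup E] [InnerProductSpace ℝ E]

lemma hsInner_self_eq (b : HilbertBasis ι ℝ E) (A : E →L[ℝ] E) :
    hsInner b A A = ∑' i, ‖A (b i)‖ ^ 2 :=
  tsum_congr fun i => real_inner_self_eq_norm_sq _

lemma hsInner_self_nonneg (b : HilbertBasis ι ℝ E) (A : E →L[ℝ] E) :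
    0 ≤ hsInner b A A := by
  rw [hsInner_self_eq]; exact tsum_nonneg fun i => sq_nonneg _

lemma hsNorm_sq (b : HilbertBasis ι ℝ E) (A : E →L[ℝ] E) :
    hsNorm b A ^ 2 = hsInner b A A :=
  Real.sq_sqrt (hsInner_self_nonneg b A)

lemma IsHS.summable_inner {b : HilbertBasis ι ℝ E} {A B : E →L[ℝ] E}
    (hA : IsHS b A) (hB : IsHS b B) :
    Summable fun i => ⟪A (b i), B (b i)⟫_ℝ := by
  have hbound : Summable fun i => (‖A (b i)‖ ^ 2 + ‖B (b i)‖ ^ 2) / 2 :=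
    (hA.add hB).div_const 2
  apply Summable.of_abs
  refine hbound.of_nonneg_of_le (fun i => abs_nonneg _) (fun i => ?_)
  have h1 := abs_real_inner_le_norm (A (b i)) (B (b i))
  nlinarith [sq_nonneg (‖A (b i)‖ - ‖B (b i)‖)]

lemma IsHS.sub {b : HilbertBasis ι ℝ E} {A B : E →L[ℝ] E}
    (hA : IsHS b A) (hB : IsHS b B) : IsHS b (A - B) := by
  have hbound : Summable fun i => 2 * ‖A (b i)‖ ^ 2 + 2 * ‖B (b i)‖ ^ 2 :=
    (hA.mul_left 2).add (hB.mul_left 2)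
  refine hbound.of_nonneg_of_le (fun i => sq_nonneg _) fun i => ?_
  have h1 : ‖(A - B) (b i)‖ ≤ ‖A (b i)‖ + ‖B (b i)‖ := by
    simpa using norm_sub_le (A (b i)) (B (b i))
  nlinarith [norm_nonneg ((A - B) (b i)), sq_nonneg (‖A (b i)‖ - ‖B (b i)‖)]

lemma IsHS.const_smul {b : HilbertBasis ι ℝ E} {A : E →L[ℝ] E}
    (hA : IsHS b A) (c : ℝ) : IsHS b (c • A) := by
  have : (fun i => ‖(c • A) (b i)‖ ^ 2) = fun i => c ^ 2 * ‖A (b i)‖ ^ 2 := by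
    funext i
    simp [norm_smul, mul_pow]
  rw [IsHS, this]
  exact hA.mul_left _

lemma hsInner_comm (b : HilbertBasis ι ℝ E) (A B : E →L[ℝ] E) :
    hsInner b A B = hsInner b B A :=
  tsum_congr fun i => real_inner_comm _ _

lemma hsInner_smul_right (b : HilbertBasis ι ℝ E) (A B : E →L[ℝ] E) (c : ℝ) :
    hsInner b A (c • B) = c * hsInner b A B := by
  unfold hsInner
  rw [← tsum_mul_left]
  exact tsum_congr fun i => by simp [real_inner_smul_right]

lemma hsInner_smul_left (b : HilbertBasis ι ℝ E) (A B : E →L[ℝ] E) (c : ℝ) :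
    hsInner b (c • A) B = c * hsInner b A B := by
  rw [hsInner_comm, hsInner_smul_right, hsInner_comm]

lemma hsInner_sub_sub {b : HilbertBasis ι ℝ E} {A B : E →L[ℝ] E}
    (hA : IsHS b A) (hB : IsHS b B) :
    hsInner b (A - B) (A - B)
      = hsInner b A A - 2 * hsInner b A B + hsInner b B B := by
  have hAA := hA.summable_inner hA
  have hAB := hA.summable_inner hB
  have hBB := hB.summable_inner hB
  have key : ∀ i, ⟪(A - B) (b i), (A - B) (b i)⟫_ℝ
      = (⟪A (b i), A (b i)⟫_ℝ - 2 * ⟪A (b i), B (b i)⟫_ℝ) + ⟪B (b i), B (b i)⟫_ℝ := by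
    intro i
    have : (A - B) (b i) = A (b i) - B (b i) := rfl
    rw [this, inner_sub_sub_self, real_inner_comm (B (b i)) (A (b i))]
    ring
  unfold hsInner
  rw [tsum_congr key, Summable.tsum_add (hAA.sub (hAB.mul_left 2)) hBB,
    Summable.tsum_sub hAA (hAB.mul_left 2), tsum_mul_left]

end HSBasic

section BasisChange

variable {ι κ E : Type*} [NormedAddCommGroup E] [InnerProductSpace ℝ E] [CompleteSpace E]

lemma parseval_prod (e : HilbertBasis κ ℝ E) (x y : E) :
    ∑' j, ⟪x, e j⟫_ℝ * ⟪y, e j⟫_ℝ = ⟪x, y⟫_ℝ := by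
  rw [← e.tsum_inner_mul_inner x y]
  exact tsum_congr fun j => by rw [real_inner_comm y (e j)]

lemma parseval_summable (e : HilbertBasis κ ℝ E) (x y : E) :
    Summable fun j => ⟪x, e j⟫_ℝ * ⟪y, e j⟫_ℝ := by
  have := e.summable_inner_mul_inner x y
  refine this.congr fun j => ?_
  rw [real_inner_comm y (e j)]

lemma parseval_sq (e : HilbertBasis κ ℝ E) (x : E) :
    ∑' j, ⟪x, e j⟫_ℝ ^ 2 = ‖x‖ ^ 2 := by
  have := parseval_prod e x x
  rw [real_inner_self_eq_norm_sq] at this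
  rw [← this]
  exact tsum_congr fun j => (pow_two _)

lemma parseval_sq_summable (e : HilbertBasis κ ℝ E) (x : E) :
    Summable fun j => ⟪x, e j⟫_ℝ ^ 2 := by
  refine (parseval_summable e x x).congr fun j => (pow_two _).symm

lemma sq_summable_prod {b : HilbertBasis ι ℝ E} (e : HilbertBasis κ ℝ E)
    {A : E →L[ℝ] E} (hA : IsHS b A) :
    Summable fun p : ι × κ => ⟪A (b p.1), e p.2⟫_ℝ ^ 2 := by
  rw [summable_prod_of_nonneg (fun p => sq_nonneg _)]
  constructor
  · exact fun i => parseval_sq_summable e (A (b i))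
  · refine hA.congr fun i => ?_
    rw [parseval_sq e (A (b i))]

lemma isHS_adjoint (b : HilbertBasis ι ℝ E) (e : HilbertBasis κ ℝ E)
    {A : E →L[ℝ] E} (hA : IsHS b A) : IsHS e (ContinuousLinearMap.adjoint A) := by
  have hs : Summable fun j => ∑' i, ⟪A (b i), e j⟫_ℝ ^ 2 :=
    (sq_summable_prod e hA).prod_symm.prod
  have key : ∀ j, (∑' i, ⟪A (b i), e j⟫_ℝ ^ 2)
      = ‖ContinuousLinearMap.adjoint A (e j)‖ ^ 2 := by
    intro j
    have h1 : ∀ i : ι, ⟪A (b i), e j⟫_ℝ ^ 2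
        = ⟪ContinuousLinearMap.adjoint A (e j), b i⟫_ℝ ^ 2 := by
      intro i
      rw [← ContinuousLinearMap.adjoint_inner_right, real_inner_comm]
    rw [tsum_congr h1, parseval_sq b]
  exact hs.congr key

lemma hsInner_adjoint (b : HilbertBasis ι ℝ E) (e : HilbertBasis κ ℝ E)
    {A B : E →L[ℝ] E} (hA : IsHS b A) (hB : IsHS b B) :
    hsInner b A B
      = hsInner e (ContinuousLinearMap.adjoint A) (ContinuousLinearMap.adjoint B) := by
  set f : ι → κ → ℝ := fun i j => ⟪A (b i), e j⟫_ℝ * ⟪B (b i), e j⟫_ℝ with hf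
  have hsum : Summable (Function.uncurry f) := by
    apply Summable.of_abs
    have hbound : Summable fun p : ι × κ =>
        (⟪A (b p.1), e p.2⟫_ℝ ^ 2 + ⟪B (b p.1), e p.2⟫_ℝ ^ 2) / 2 :=
      ((sq_summable_prod e hA).add (sq_summable_prod e hB)).div_const 2
    refine hbound.of_nonneg_of_le (fun p => abs_nonneg _) fun p => ?_
    have hu : |Function.uncurry f p| = |⟪A (b p.1), e p.2⟫_ℝ| * |⟪B (b p.1), e p.2⟫_ℝ| := by
      rw [hf]; exact abs_mul _ _
    rw [hu]
    nlinarith [sq_nonneg (|⟪A (b p.1), e p.2⟫_ℝ| - |⟪B (b p.1), e p.2⟫_ℝ|),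
      abs_nonneg (⟪A (b p.1), e p.2⟫_ℝ), abs_nonneg (⟪B (b p.1), e p.2⟫_ℝ),
      sq_abs (⟪A (b p.1), e p.2⟫_ℝ), sq_abs (⟪B (b p.1), e p.2⟫_ℝ)]
  have h₁ : ∀ i, Summable (f i) := fun i => parseval_summable e (A (b i)) (B (b i))
  have h₂ : ∀ j, Summable fun i => f i j := fun j =>
    (hsum.prod_symm.prod_factor j).congr fun i => rfl
  have step1 : ∀ i, ⟪A (b i), B (b i)⟫_ℝ = ∑' j, f i j := fun i =>
    (parseval_prod e _ _).symm
  have step2 : ∀ j, (∑' i, f i j)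
      = ⟪ContinuousLinearMap.adjoint A (e j), ContinuousLinearMap.adjoint B (e j)⟫_ℝ := by
    intro j
    rw [← parseval_prod b (ContinuousLinearMap.adjoint A (e j))
      (ContinuousLinearMap.adjoint B (e j))]
    refine tsum_congr fun i => ?_
    simp only [hf]
    rw [ContinuousLinearMap.adjoint_inner_left, ContinuousLinearMap.adjoint_inner_left,
      real_inner_comm (e j) (A (b i)), real_inner_comm (e j) (B (b i))]
  calc hsInner b A B = ∑' i, ∑' j, f i j := tsum_congr step1
    _ = ∑' j, ∑' i, f i j := (Summable.tsum_comm' hsum h₁ h₂).symm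
    _ = hsInner e (ContinuousLinearMap.adjoint A) (ContinuousLinearMap.adjoint B) :=
        tsum_congr step2

lemma isHS_basis_change (b : HilbertBasis ι ℝ E) (e : HilbertBasis κ ℝ E)
    {A : E →L[ℝ] E} (hA : IsHS b A) : IsHS e A := by
  have h2 := isHS_adjoint e e (isHS_adjoint b e hA)
  rwa [ContinuousLinearMap.adjoint_adjoint] at h2

lemma hsInner_basis_change (b : HilbertBasis ι ℝ E) (e : HilbertBasis κ ℝ E)
    {A B : E →L[ℝ] E} (hA : IsHS b A) (hB : IsHS b B) :
    hsInner b A B = hsInner e A B := by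
  rw [hsInner_adjoint b e hA hB,
    hsInner_adjoint e e (isHS_adjoint b e hA) (isHS_adjoint b e hB),
    ContinuousLinearMap.adjoint_adjoint, ContinuousLinearMap.adjoint_adjoint]

end BasisChange

section Tensor

lemma norm_tmul (P : HilbertTensorProduct H₁ H₂ H) (u : H₁) (v : H₂) :
    ‖P.tmul u v‖ = ‖u‖ * ‖v‖ := by
  have h := P.inner_tmul u u v v
  rw [real_inner_self_eq_norm_sq, real_inner_self_eq_norm_sq, real_inner_self_eq_norm_sq] at h
  have h2 : ‖P.tmul u v‖ ^ 2 = (‖u‖ * ‖v‖) ^ 2 := by rw [mul_pow]; exact h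
  rw [← Real.sqrt_sq (norm_nonneg (P.tmul u v)), h2, Real.sqrt_sq (by positivity)]

/-- `v ↦ u ⊗ v` as a continuous linear map. -/
def tmulRight (P : HilbertTensorProduct H₁ H₂ H) (u : H₁) : H₂ →L[ℝ] H :=
  LinearMap.mkContinuous (P.tmul u) ‖u‖ fun v => le_of_eq (norm_tmul P u v)

@[simp] lemma tmulRight_apply (P : HilbertTensorProduct H₁ H₂ H) (u : H₁) (v : H₂) :
    tmulRight P u v = P.tmul u v := rfl

/-- `u ↦ u ⊗ v` as a continuous linear map. -/
def tmulLeft (P : HilbertTensorProduct H₁ H₂ H) (v : H₂) : H₁ →L[ℝ] H :=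
  LinearMap.mkContinuous (P.tmul.flip v) ‖v‖ fun u => by
    rw [LinearMap.flip_apply, norm_tmul, mul_comm]

@[simp] lemma tmulLeft_apply (P : HilbertTensorProduct H₁ H₂ H) (v : H₂) (u : H₁) :
    tmulLeft P v u = P.tmul u v := rfl

lemma tensor_orthonormal (P : HilbertTensorProduct H₁ H₂ H)
    (b₁ : HilbertBasis ι₁ ℝ H₁) (b₂ : HilbertBasis ι₂ ℝ H₂) :
    Orthonormal ℝ (fun p : ι₁ × ι₂ => P.tmul (b₁ p.1) (b₂ p.2)) := by
  classical
  rw [orthonormal_iff_ite]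
  intro p q
  rw [P.inner_tmul, orthonormal_iff_ite.mp b₁.orthonormal p.1 q.1,
    orthonormal_iff_ite.mp b₂.orthonormal p.2 q.2]
  by_cases hi : p.1 = q.1 <;> by_cases hj : p.2 = q.2 <;>
    simp [hi, hj, Prod.ext_iff]

lemma tensor_dense (P : HilbertTensorProduct H₁ H₂ H)
    (b₁ : HilbertBasis ι₁ ℝ H₁) (b₂ : HilbertBasis ι₂ ℝ H₂) :
    ⊤ ≤ (Submodule.span ℝ
      (Set.range fun p : ι₁ × ι₂ => P.tmul (b₁ p.1) (b₂ p.2))).topologicalClosure := by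
  set V := (Submodule.span ℝ
    (Set.range fun p : ι₁ × ι₂ => P.tmul (b₁ p.1) (b₂ p.2))).topologicalClosure with hV
  have hVclosed : IsClosed (V : Set H) := Submodule.isClosed_topologicalClosure _
  have hgen : ∀ p : ι₁ × ι₂, P.tmul (b₁ p.1) (b₂ p.2) ∈ V := fun p =>
    Submodule.le_topologicalClosure _ (Submodule.subset_span ⟨p, rfl⟩)
  have step1 : ∀ (i : ι₁) (v : H₂), P.tmul (b₁ i) v ∈ V := by
    intro i v
    have hdense : Dense (Submodule.span ℝ (Set.range b₂) : Set H₂) := by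
      rw [Submodule.dense_iff_topologicalClosure_eq_top]; exact b₂.dense_span
    set S : Submodule ℝ H₂ := V.comap (tmulRight P (b₁ i) : H₂ →ₗ[ℝ] H) with hS
    have hSclosed : IsClosed (S : Set H₂) :=
      hVclosed.preimage (tmulRight P (b₁ i)).continuous
    have hsub : Submodule.span ℝ (Set.range b₂) ≤ S := by
      rw [Submodule.span_le]
      rintro _ ⟨j, rfl⟩
      show tmulRight P (b₁ i) (b₂ j) ∈ V
      rw [tmulRight_apply]
      exact hgen (i, j)
    have hx : v ∈ S := by
      have h1 : closure (Submodule.span ℝ (Set.range b₂) : Set H₂) ⊆ (S : Set H₂) :=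
        closure_minimal (SetLike.coe_subset_coe.mpr hsub) hSclosed
      have h2 : v ∈ closure (Submodule.span ℝ (Set.range b₂) : Set H₂) := by
        rw [hdense.closure_eq]; trivial
      exact h1 h2
    simpa [hS, Submodule.mem_comap] using hx
  have step2 : ∀ (u : H₁) (v : H₂), P.tmul u v ∈ V := by
    intro u v
    have hdense : Dense (Submodule.span ℝ (Set.range b₁) : Set H₁) := by
      rw [Submodule.dense_iff_topologicalClosure_eq_top]; exact b₁.dense_span
    set S : Submodule ℝ H₁ := V.comap (tmulLeft P v : H₁ →ₗ[ℝ] H) with hS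
    have hSclosed : IsClosed (S : Set H₁) :=
      hVclosed.preimage (tmulLeft P v).continuous
    have hsub : Submodule.span ℝ (Set.range b₁) ≤ S := by
      rw [Submodule.span_le]
      rintro _ ⟨i, rfl⟩
      show tmulLeft P v (b₁ i) ∈ V
      rw [tmulLeft_apply]
      exact step1 i v
    have hx : u ∈ S := by
      have h1 : closure (Submodule.span ℝ (Set.range b₁) : Set H₁) ⊆ (S : Set H₁) :=
        closure_minimal (SetLike.coe_subset_coe.mpr hsub) hSclosed
      have h2 : u ∈ closure (Submodule.span ℝ (Set.range b₁) : Set H₁) := by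
        rw [hdense.closure_eq]; trivial
      exact h1 h2
    simpa [hS, Submodule.mem_comap] using hx
  have hfin : (Submodule.span ℝ
      (Set.range fun p : H₁ × H₂ => P.tmul p.1 p.2) : Submodule ℝ H).topologicalClosure ≤ V := by
    refine Submodule.topologicalClosure_minimal _ ?_ hVclosed
    rw [Submodule.span_le]
    rintro _ ⟨p, rfl⟩
    exact step2 p.1 p.2
  rw [P.dense_span] at hfin
  exact hfin

/-- The tensor-product Hilbert basis. -/
def tensorBasis (P : HilbertTensorProduct H₁ H₂ H)
    (b₁ : HilbertBasis ι₁ ℝ H₁) (b₂ : HilbertBasis ι₂ ℝ H₂) :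
    HilbertBasis (ι₁ × ι₂) ℝ H :=
  HilbertBasis.mk (tensor_orthonormal P b₁ b₂) (tensor_dense P b₁ b₂)

lemma tensorBasis_apply (P : HilbertTensorProduct H₁ H₂ H)
    (b₁ : HilbertBasis ι₁ ℝ H₁) (b₂ : HilbertBasis ι₂ ℝ H₂) (p : ι₁ × ι₂) :
    tensorBasis P b₁ b₂ p = P.tmul (b₁ p.1) (b₂ p.2) :=
  congrFun (HilbertBasis.coe_mk _ _) p

lemma isHS_otimes (P : HilbertTensorProduct H₁ H₂ H)
    (b₁ : HilbertBasis ι₁ ℝ H₁) (b₂ : HilbertBasis ι₂ ℝ H₂)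
    {A : H₁ →L[ℝ] H₁} {B : H₂ →L[ℝ] H₂} (hA : IsHS b₁ A) (hB : IsHS b₂ B) :
    IsHS (tensorBasis P b₁ b₂) (P.otimes A B) := by
  have hs := hA.mul_of_nonneg hB (fun i => sq_nonneg _) (fun j => sq_nonneg _)
  refine hs.congr fun p => ?_
  rw [tensorBasis_apply, P.otimes_tmul, norm_tmul, mul_pow]

lemma hsInner_otimes (P : HilbertTensorProduct H₁ H₂ H)
    (b₁ : HilbertBasis ι₁ ℝ H₁) (b₂ : HilbertBasis ι₂ ℝ H₂)
    {A₁ A₂ : H₁ →L[ℝ] H₁} {B₁ B₂ : H₂ →L[ℝ] H₂}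
    (hA₁ : IsHS b₁ A₁) (hA₂ : IsHS b₁ A₂) (hB₁ : IsHS b₂ B₁) (hB₂ : IsHS b₂ B₂) :
    hsInner (tensorBasis P b₁ b₂) (P.otimes A₁ B₁) (P.otimes A₂ B₂)
      = hsInner b₁ A₁ A₂ * hsInner b₂ B₁ B₂ := by
  have hf : Summable fun i => ‖⟪A₁ (b₁ i), A₂ (b₁ i)⟫_ℝ‖ :=
    ((hA₁.summable_inner hA₂).abs).congr fun i => (Real.norm_eq_abs _).symm
  have hg : Summable fun j => ‖⟪B₁ (b₂ j), B₂ (b₂ j)⟫_ℝ‖ :=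
    ((hB₁.summable_inner hB₂).abs).congr fun j => (Real.norm_eq_abs _).symm
  have key : ∀ p : ι₁ × ι₂,
      ⟪(P.otimes A₁ B₁) (tensorBasis P b₁ b₂ p), (P.otimes A₂ B₂) (tensorBasis P b₁ b₂ p)⟫_ℝ
        = ⟪A₁ (b₁ p.1), A₂ (b₁ p.1)⟫_ℝ * ⟪B₁ (b₂ p.2), B₂ (b₂ p.2)⟫_ℝ := by
    intro p
    rw [tensorBasis_apply, P.otimes_tmul, P.otimes_tmul, P.inner_tmul]
  unfold hsInner
  rw [tsum_congr key, ← tsum_mul_tsum_of_summable_norm hf hg]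

end Tensor

/-- the minimal squared distance over `C₂ ∈ S₂(H₂)` of `‖C − C₁ ⊗̃ C₂‖₂²`
equals `D(C₁) = ‖C‖₂² − ‖T₁(C, C₁)‖₂²/‖C₁‖₂²`. -/
theorem stmt8 (P : HilbertTensorProduct H₁ H₂ H)
    (b₁ : HilbertBasis ι₁ ℝ H₁) (b₂ : HilbertBasis ι₂ ℝ H₂) (b : HilbertBasis κ ℝ H)
    (T₁ : (H →L[ℝ] H) → (H₁ →L[ℝ] H₁) → (H₂ →L[ℝ] H₂))
    (hT₁ : IsT1 P b₁ b₂ b T₁)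
    (C : H →L[ℝ] H) (C₁ : H₁ →L[ℝ] H₁) (hC : IsHS b C) (hC₁ : IsHS b₁ C₁)
    (hC₁ne : C₁ ≠ 0) :
    IsGLB {x : ℝ | ∃ C₂ : H₂ →L[ℝ] H₂, IsHS b₂ C₂ ∧ x = hsNorm b (C - P.otimes C₁ C₂) ^ 2}
      (hsNorm b C ^ 2 - hsNorm b₂ (T₁ C C₁) ^ 2 / hsNorm b₁ C₁ ^ 2) := by
  obtain ⟨hT1a, hT1b⟩ := hT₁
  have hTHS : IsHS b₂ (T₁ C C₁) := hT1a C C₁ hC hC₁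
  have hn₁pos : 0 < hsInner b₁ C₁ C₁ := by
    have hex : ∃ i, C₁ (b₁ i) ≠ 0 := by
      by_contra h
      push_neg at h
      apply hC₁ne
      have hdense : Dense (Submodule.span ℝ (Set.range b₁) : Set H₁) := by
        rw [Submodule.dense_iff_topologicalClosure_eq_top]; exact b₁.dense_span
      refine ContinuousLinearMap.ext_on hdense ?_
      rintro _ ⟨i, rfl⟩
      simp [h i]
    obtain ⟨i, hi⟩ := hex
    have h1 : ‖C₁ (b₁ i)‖ ^ 2 ≤ ∑' j, ‖C₁ (b₁ j)‖ ^ 2 :=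
      Summable.le_tsum hC₁ i fun j _ => sq_nonneg _
    have h2 : 0 < ‖C₁ (b₁ i)‖ ^ 2 := pow_pos (norm_pos_iff.mpr hi) 2
    rw [hsInner_self_eq]
    linarith
  have hn₁ne : hsInner b₁ C₁ C₁ ≠ 0 := ne_of_gt hn₁pos
  have hCstHS : IsHS b₂ ((hsInner b₁ C₁ C₁)⁻¹ • T₁ C C₁) := hTHS.const_smul _
  -- the key value formula
  have hval : ∀ C₂ : H₂ →L[ℝ] H₂, IsHS b₂ C₂ →
      hsNorm b (C - P.otimes C₁ C₂) ^ 2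
        = (hsInner b C C - hsInner b₂ (T₁ C C₁) (T₁ C C₁) / hsInner b₁ C₁ C₁)
          + hsInner b₁ C₁ C₁ *
            hsInner b₂ (C₂ - (hsInner b₁ C₁ C₁)⁻¹ • T₁ C C₁)
              (C₂ - (hsInner b₁ C₁ C₁)⁻¹ • T₁ C C₁) := by
    intro C₂ hC₂
    have hXH : IsHS (tensorBasis P b₁ b₂) (P.otimes C₁ C₂) := isHS_otimes P b₁ b₂ hC₁ hC₂
    have hX : IsHS b (P.otimes C₁ C₂) := isHS_basis_change (tensorBasis P b₁ b₂) b hXH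
    have hXX : hsInner b (P.otimes C₁ C₂) (P.otimes C₁ C₂)
        = hsInner b₁ C₁ C₁ * hsInner b₂ C₂ C₂ := by
      rw [← hsInner_basis_change (tensorBasis P b₁ b₂) b hXH hXH,
        hsInner_otimes P b₁ b₂ hC₁ hC₁ hC₂ hC₂]
    have hCX : hsInner b C (P.otimes C₁ C₂) = hsInner b₂ C₂ (T₁ C C₁) :=
      (hT1b C C₁ C₂ hC hC₁ hC₂).symm
    have hq : hsInner b₂ (C₂ - (hsInner b₁ C₁ C₁)⁻¹ • T₁ C C₁)
          (C₂ - (hsInner b₁ C₁ C₁)⁻¹ • T₁ C C₁)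
        = hsInner b₂ C₂ C₂
          - 2 * ((hsInner b₁ C₁ C₁)⁻¹ * hsInner b₂ C₂ (T₁ C C₁))
          + (hsInner b₁ C₁ C₁)⁻¹ * ((hsInner b₁ C₁ C₁)⁻¹
              * hsInner b₂ (T₁ C C₁) (T₁ C C₁)) := by
      rw [hsInner_sub_sub hC₂ hCstHS, hsInner_smul_right, hsInner_smul_left,
        hsInner_smul_right]
    rw [hsNorm_sq, hsInner_sub_sub hC hX, hXX, hCX, hq]
    field_simp
    ring
  apply IsLeast.isGLB
  constructor
  · refine ⟨(hsInner b₁ C₁ C₁)⁻¹ • T₁ C C₁, hCstHS, ?_⟩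
    rw [hval _ hCstHS]
    have hq0 : hsInner b₂
        ((hsInner b₁ C₁ C₁)⁻¹ • T₁ C C₁ - (hsInner b₁ C₁ C₁)⁻¹ • T₁ C C₁)
        ((hsInner b₁ C₁ C₁)⁻¹ • T₁ C C₁ - (hsInner b₁ C₁ C₁)⁻¹ • T₁ C C₁) = 0 := by
      rw [sub_self]
      simp [hsInner]
    rw [hq0, mul_zero, add_zero, hsNorm_sq, hsNorm_sq, hsNorm_sq]
  · rintro x ⟨C₂, hC₂, rfl⟩
    rw [hval C₂ hC₂, hsNorm_sq, hsNorm_sq, hsNorm_sq]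
    have hq := hsInner_self_nonneg b₂ (C₂ - (hsInner b₁ C₁ C₁)⁻¹ • T₁ C C₁)
    nlinarith
end
end

section
/- For C ∈ S₂(H₁ ⊗ H₂) and nonzero C₁ ∈ S₂(H₁), the quantity D(C₁) = ‖C‖₂² − ‖T₁(C, C₁)‖₂²/‖C₁‖₂² equals zero if and only if C = C₁ ⊗̃ C₂ for some C₂ ∈ S₂(H₂). -/
open scoped InnerProductSpace
noncomputable section

variable {ι₁ ι₂ κ H₁ H₂ H : Type*}
variable [NormedAddCommGroup H₁] [InnerProductSpace ℝ H₁] [CompleteSpace H₁]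
variable [NormedAddCommGroup H₂] [InnerProductSpace ℝ H₂] [CompleteSpace H₂]
variable [NormedAddCommGroup H] [InnerProductSpace ℝ H] [CompleteSpace H]

/-! With `n = ‖C₁‖₂²` and `E = C₁ ⊗̃ (n⁻¹ • T₁(C, C₁))`, the duality `⟨B, T₁(C, C₁)⟩ = ⟨C, C₁ ⊗̃ B⟩`
and `⟨A ⊗̃ B, A' ⊗̃ B'⟩ = ⟨A, A'⟩ ⟨B, B'⟩` give `⟨C, E⟩ = ⟨E, E⟩ = ‖T₁(C, C₁)‖₂² / n`, hence
`D(C₁) = ‖C - E‖₂²`: `E` is the orthogonal projection of `C` onto `C₁ ⊗̃ S₂(H₂)`. So `D(C₁) = 0`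
iff `C = E`, which is a product; conversely `T₁(C₁ ⊗̃ C₂, C₁) = n • C₂`, so `E = C` for a product.

Hilbert–Schmidt inner products are defined through an arbitrary Hilbert basis, so the product
formula, which is computed in the basis `b₁ i ⊗ b₂ j`, needs their basis independence; that
follows by expanding both sides in a second basis, which exchanges `X` with its adjoint. -/

open ContinuousLinearMap
open scoped InnerProduct

lemma Summable.mul_of_summable_sq {ι : Type*} {f g : ι → ℝ} (hf : Summable fun i => f i ^ 2)
    (hg : Summable fun i => g i ^ 2) : Summable fun i => f i * g i :=
  Summable.of_norm_bounded (hf.add hg) fun i => by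
    rw [Real.norm_eq_abs, abs_mul, ← sq_abs (f i), ← sq_abs (g i)]
    nlinarith [two_mul_le_add_sq |f i| |g i|, abs_nonneg (f i), abs_nonneg (g i)]

lemma HilbertBasis.hasSum_inner_sq {ι F : Type*} [NormedAddCommGroup F] [InnerProductSpace ℝ F]
    (b : HilbertBasis ι ℝ F) (x : F) : HasSum (fun i => ⟪x, b i⟫_ℝ ^ 2) (‖x‖ ^ 2) := by
  simpa only [real_inner_self_eq_norm_sq, real_inner_comm x, ← sq] using
    b.hasSum_inner_mul_inner x x

lemma HilbertBasis.map_mem_of_isClosed {ι E F : Type*} [NormedAddCommGroup E]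
    [InnerProductSpace ℝ E] [AddCommGroup F] [Module ℝ F] [TopologicalSpace F]
    (b : HilbertBasis ι ℝ E) {f : E →ₗ[ℝ] F} (hf : Continuous f) {S : Submodule ℝ F}
    (hS : IsClosed (S : Set F)) (h : ∀ i, f (b i) ∈ S) (x : E) : f x ∈ S := by
  have hspan : Submodule.span ℝ (Set.range b) ≤ S.comap f :=
    Submodule.span_le.2 (Set.range_subset_iff.2 h)
  have hclosure := Submodule.topologicalClosure_minimal _ hspan (hS.preimage hf)
  rw [b.dense_span] at hclosure
  exact hclosure Submodule.mem_top

section HilbertSchmidt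

variable {α β F : Type*} [NormedAddCommGroup F] [InnerProductSpace ℝ F]
  (c : HilbertBasis α ℝ F) (d : HilbertBasis β ℝ F) {X Y Z : F →L[ℝ] F}

lemma IsHS.sub_s9 (hX : IsHS c X) (hY : IsHS c Y) : IsHS c (X - Y) := by
  refine Summable.of_nonneg_of_le (fun _ => sq_nonneg _) (fun k => ?_) ((hX.add hY).mul_left 2)
  rw [sub_apply]
  nlinarith [norm_sub_le (X (c k)) (Y (c k)), norm_nonneg (X (c k) - Y (c k)),
    two_mul_le_add_sq ‖X (c k)‖ ‖Y (c k)‖, norm_nonneg (X (c k)), norm_nonneg (Y (c k))]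

lemma IsHS.smul (hX : IsHS c X) (r : ℝ) : IsHS c (r • X) :=
  (hX.mul_left (r ^ 2)).congr fun k => by
    rw [smul_apply, norm_smul, mul_pow, Real.norm_eq_abs, sq_abs]

lemma IsHS.summable_inner_s9 (hX : IsHS c X) (hY : IsHS c Y) :
    Summable fun k => ⟪X (c k), Y (c k)⟫_ℝ :=
  Summable.of_norm_bounded (Summable.mul_of_summable_sq hX hY) fun _ =>
    abs_real_inner_le_norm _ _

lemma hsInner_comm_s9 (X Y : F →L[ℝ] F) : hsInner c X Y = hsInner c Y X :=
  tsum_congr fun _ => real_inner_comm _ _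

lemma hsInner_smul_right_s9 (X Y : F →L[ℝ] F) (r : ℝ) :
    hsInner c X (r • Y) = r * hsInner c X Y := by
  simp only [hsInner, smul_apply, real_inner_smul_right, tsum_mul_left]

lemma hsInner_sub_right (hX : IsHS c X) (hY : IsHS c Y) (hZ : IsHS c Z) :
    hsInner c X (Y - Z) = hsInner c X Y - hsInner c X Z := by
  simp only [hsInner, sub_apply, inner_sub_right]
  exact (hX.summable_inner_s9 c hY).tsum_sub (hX.summable_inner_s9 c hZ)

lemma hsInner_sub_sub_self (hX : IsHS c X) (hY : IsHS c Y) :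
    hsInner c (X - Y) (X - Y) = hsInner c X X - 2 * hsInner c X Y + hsInner c Y Y := by
  have hXY := hX.sub_s9 c hY
  rw [hsInner_sub_right c hXY hX hY, hsInner_comm_s9 c _ X, hsInner_comm_s9 c _ Y,
    hsInner_sub_right c hX hX hY, hsInner_sub_right c hY hX hY, hsInner_comm_s9 c Y X]
  ring

lemma hsInner_self_nonneg_s9 (X : F →L[ℝ] F) : 0 ≤ hsInner c X X :=
  tsum_nonneg fun _ => real_inner_self_nonneg

lemma hsNorm_sq_s9 (X : F →L[ℝ] F) : hsNorm c X ^ 2 = hsInner c X X :=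
  Real.sq_sqrt (hsInner_self_nonneg_s9 c X)

lemma hsInner_self_eq_zero (hX : IsHS c X) : hsInner c X X = 0 ↔ X = 0 := by
  have hsum : HasSum (fun k => ‖X (c k)‖ ^ 2) (hsInner c X X) := by
    simpa only [hsInner, real_inner_self_eq_norm_sq] using hX.hasSum
  constructor
  · intro h
    rw [h, hasSum_zero_iff_of_nonneg fun _ => sq_nonneg _] at hsum
    refine ext_on (s := Set.range c) (Submodule.dense_iff_topologicalClosure_eq_top.2 c.dense_span)
      ?_
    rintro _ ⟨k, rfl⟩
    simpa using congrFun hsum k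
  · rintro rfl
    simp [hsInner]

lemma hsInner_self_pos (hX : IsHS c X) (hX0 : X ≠ 0) : 0 < hsInner c X X :=
  (hsInner_self_nonneg_s9 c X).lt_of_ne (Ne.symm (mt (hsInner_self_eq_zero c hX).1 hX0))

lemma eq_of_forall_hsInner_eq (hX : IsHS c X) (hY : IsHS c Y)
    (h : ∀ Z, IsHS c Z → hsInner c Z X = hsInner c Z Y) : X = Y := by
  have hXY := hX.sub_s9 c hY
  rw [← sub_eq_zero, ← hsInner_self_eq_zero c hXY, hsInner_sub_right c hXY hX hY, h _ hXY,
    sub_self]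

lemma IsHS.summable_inner_sq_prod (hX : IsHS c X) :
    Summable fun p : α × β => ⟪X (c p.1), d p.2⟫_ℝ ^ 2 := by
  rw [summable_prod_of_nonneg fun p => sq_nonneg _]
  refine ⟨fun k => (d.hasSum_inner_sq (X (c k))).summable, ?_⟩
  simpa only [fun k => (d.hasSum_inner_sq (X (c k))).tsum_eq, IsHS] using hX

lemma hasSum_hsInner_prod (hX : IsHS c X) (hY : IsHS c Y) :
    HasSum (fun p : α × β => ⟪X (c p.1), d p.2⟫_ℝ * ⟪Y (c p.1), d p.2⟫_ℝ) (hsInner c X Y) := by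
  have hsum := Summable.mul_of_summable_sq (hX.summable_inner_sq_prod c d)
    (hY.summable_inner_sq_prod c d)
  have hfib := hsum.hasSum.prod_fiberwise fun k =>
    (d.hasSum_inner_mul_inner (X (c k)) (Y (c k))).congr_fun fun m => by
      rw [real_inner_comm (d m) (Y (c k))]
  rw [hsInner, hfib.tsum_eq]
  exact hsum.hasSum

variable [CompleteSpace F]

lemma IsHS.adjoint (hX : IsHS c X) : IsHS d (X†) := by
  have hsum : Summable fun p : β × α => ⟪(X†) (d p.1), c p.2⟫_ℝ ^ 2 :=
    ((hX.summable_inner_sq_prod c d).prod_symm).congr fun p => by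
      rw [adjoint_inner_left, real_inner_comm]
      rfl
  exact (hsum.hasSum.prod_fiberwise fun m => c.hasSum_inner_sq ((X†) (d m))).summable

lemma IsHS.change_basis (hX : IsHS c X) : IsHS d X := by
  simpa only [adjoint_adjoint] using (hX.adjoint c c).adjoint c d

lemma hsInner_adjoint_s9 (hX : IsHS c X) (hY : IsHS c Y) :
    hsInner d (X†) (Y†) = hsInner c X Y := by
  have h := hasSum_hsInner_prod d c (hX.adjoint c d) (hY.adjoint c d)
  simp only [adjoint_inner_left, real_inner_comm _ (d _)] at h
  exact ((Equiv.prodComm α β).hasSum_iff.2 h).unique (hasSum_hsInner_prod c d hX hY)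

lemma hsInner_change_basis (hX : IsHS c X) (hY : IsHS c Y) :
    hsInner c X Y = hsInner d X Y := by
  rw [← hsInner_adjoint_s9 c d hX hY,
    hsInner_adjoint_s9 d d (hX.change_basis c d) (hY.change_basis c d)]

end HilbertSchmidt

namespace HilbertTensorProduct

variable (P : HilbertTensorProduct H₁ H₂ H)

omit [CompleteSpace H₁] [CompleteSpace H₂] [CompleteSpace H] in
lemma norm_tmul (u : H₁) (v : H₂) : ‖P.tmul u v‖ = ‖u‖ * ‖v‖ := by
  rw [norm_eq_sqrt_real_inner, P.inner_tmul, Real.sqrt_mul real_inner_self_nonneg,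
    ← norm_eq_sqrt_real_inner, ← norm_eq_sqrt_real_inner]

omit [CompleteSpace H₁] [CompleteSpace H₂] [CompleteSpace H] in
lemma continuous_tmul (u : H₁) : Continuous (P.tmul u) :=
  AddMonoidHomClass.continuous_of_bound _ ‖u‖ fun v => (P.norm_tmul u v).le

omit [CompleteSpace H₁] [CompleteSpace H₂] [CompleteSpace H] in
lemma continuous_tmul_flip (v : H₂) : Continuous (P.tmul.flip v) :=
  AddMonoidHomClass.continuous_of_bound _ ‖v‖ fun u => by
    rw [LinearMap.flip_apply, norm_tmul, mul_comm]

omit [CompleteSpace H₁] [CompleteSpace H₂] [CompleteSpace H] in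
lemma orthonormal_tmul {v : ι₁ → H₁} {w : ι₂ → H₂} (hv : Orthonormal ℝ v)
    (hw : Orthonormal ℝ w) : Orthonormal ℝ fun p : ι₁ × ι₂ => P.tmul (v p.1) (w p.2) := by
  classical
  rw [orthonormal_iff_ite] at hv hw ⊢
  intro p q
  rw [P.inner_tmul, hv, hw]
  by_cases h₁ : p.1 = q.1 <;> by_cases h₂ : p.2 = q.2 <;> simp [h₁, h₂, Prod.ext_iff]

variable (b₁ : HilbertBasis ι₁ ℝ H₁) (b₂ : HilbertBasis ι₂ ℝ H₂)

omit [CompleteSpace H₁] [CompleteSpace H₂] [CompleteSpace H] in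
lemma topologicalClosure_span_tmul_eq_top :
    (Submodule.span ℝ (Set.range fun p : ι₁ × ι₂ =>
      P.tmul (b₁ p.1) (b₂ p.2))).topologicalClosure = ⊤ := by
  set S := (Submodule.span ℝ (Set.range fun p : ι₁ × ι₂ =>
    P.tmul (b₁ p.1) (b₂ p.2))).topologicalClosure
  have hS : IsClosed (S : Set H) := Submodule.isClosed_topologicalClosure _
  have hbasis (i : ι₁) (v : H₂) : P.tmul (b₁ i) v ∈ S :=
    b₂.map_mem_of_isClosed (P.continuous_tmul _) hS
      (fun j => Submodule.le_topologicalClosure _ (Submodule.subset_span ⟨(i, j), rfl⟩)) v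
  have htmul (u : H₁) (v : H₂) : P.tmul u v ∈ S :=
    b₁.map_mem_of_isClosed (P.continuous_tmul_flip v) hS (fun i => hbasis i v) u
  rw [eq_top_iff, ← P.dense_span]
  refine Submodule.topologicalClosure_minimal _ ?_ hS
  rw [Submodule.span_le]
  rintro _ ⟨⟨u, v⟩, rfl⟩
  exact htmul u v

def tensorBasis : HilbertBasis (ι₁ × ι₂) ℝ H :=
  HilbertBasis.mk (P.orthonormal_tmul b₁.orthonormal b₂.orthonormal)
    (P.topologicalClosure_span_tmul_eq_top b₁ b₂).ge

omit [CompleteSpace H₁] [CompleteSpace H₂] in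
lemma tensorBasis_apply (p : ι₁ × ι₂) :
    P.tensorBasis b₁ b₂ p = P.tmul (b₁ p.1) (b₂ p.2) :=
  congrFun (HilbertBasis.coe_mk _ _) p

variable (b : HilbertBasis κ ℝ H) {A A' : H₁ →L[ℝ] H₁} {B B' : H₂ →L[ℝ] H₂}

omit [CompleteSpace H₁] [CompleteSpace H₂] in
lemma isHS_otimes (hA : IsHS b₁ A) (hB : IsHS b₂ B) : IsHS b (P.otimes A B) := by
  refine IsHS.change_basis (P.tensorBasis b₁ b₂) b ?_
  refine (hA.mul_of_nonneg hB (fun _ => sq_nonneg _) (fun _ => sq_nonneg _)).congr fun p => ?_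
  rw [tensorBasis_apply, P.otimes_tmul, norm_tmul, mul_pow]

omit [CompleteSpace H₁] [CompleteSpace H₂] in
lemma hsInner_otimes (hA : IsHS b₁ A) (hA' : IsHS b₁ A') (hB : IsHS b₂ B) (hB' : IsHS b₂ B') :
    hsInner b (P.otimes A B) (P.otimes A' B') = hsInner b₁ A A' * hsInner b₂ B B' := by
  rw [← hsInner_change_basis (P.tensorBasis b₁ b₂) b (P.isHS_otimes b₁ b₂ _ hA hB)
    (P.isHS_otimes b₁ b₂ _ hA' hB'), hsInner, hsInner, hsInner,
    tsum_mul_tsum_of_summable_norm (hA.summable_inner_s9 b₁ hA').norm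
      (hB.summable_inner_s9 b₂ hB').norm]
  simp only [tensorBasis_apply, P.otimes_tmul, P.inner_tmul]

end HilbertTensorProduct

namespace IsT1

variable {P : HilbertTensorProduct H₁ H₂ H} {b₁ : HilbertBasis ι₁ ℝ H₁}
  {b₂ : HilbertBasis ι₂ ℝ H₂} {b : HilbertBasis κ ℝ H}
  {T₁ : (H →L[ℝ] H) → (H₁ →L[ℝ] H₁) → (H₂ →L[ℝ] H₂)} (hT₁ : IsT1 P b₁ b₂ b T₁)
  {C : H →L[ℝ] H} {A C₁ : H₁ →L[ℝ] H₁} {B : H₂ →L[ℝ] H₂}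
include hT₁

omit [CompleteSpace H₁] [CompleteSpace H₂] in
lemma apply_otimes (hA : IsHS b₁ A) (hB : IsHS b₂ B) (hC₁ : IsHS b₁ C₁) :
    T₁ (P.otimes A B) C₁ = hsInner b₁ A C₁ • B := by
  have hAB := P.isHS_otimes b₁ b₂ b hA hB
  refine eq_of_forall_hsInner_eq b₂ (hT₁.1 _ _ hAB hC₁) (hB.smul b₂ _) fun Z hZ => ?_
  rw [hT₁.2 _ _ _ hAB hC₁ hZ, P.hsInner_otimes b₁ b₂ b hA hC₁ hB hZ, hsInner_smul_right_s9,
    hsInner_comm_s9 b₂ Z]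

omit [CompleteSpace H₁] [CompleteSpace H₂] in
lemma hsNorm_sq_sub_div_hsNorm_sq (hC : IsHS b C) (hC₁ : IsHS b₁ C₁) (hC₁ne : C₁ ≠ 0) :
    hsNorm b C ^ 2 - hsNorm b₂ (T₁ C C₁) ^ 2 / hsNorm b₁ C₁ ^ 2 =
      hsInner b (C - P.otimes C₁ ((hsInner b₁ C₁ C₁)⁻¹ • T₁ C C₁))
        (C - P.otimes C₁ ((hsInner b₁ C₁ C₁)⁻¹ • T₁ C C₁)) := by
  set n := hsInner b₁ C₁ C₁
  set t := T₁ C C₁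
  have hn : n ≠ 0 := (hsInner_self_pos b₁ hC₁ hC₁ne).ne'
  have ht : IsHS b₂ t := hT₁.1 C C₁ hC hC₁
  have hCE : hsInner b C (P.otimes C₁ (n⁻¹ • t)) = n⁻¹ * hsInner b₂ t t := by
    rw [← hT₁.2 C C₁ _ hC hC₁ (ht.smul b₂ _), hsInner_comm_s9, hsInner_smul_right_s9]
  have hEE : hsInner b (P.otimes C₁ (n⁻¹ • t)) (P.otimes C₁ (n⁻¹ • t)) =
      n⁻¹ * hsInner b₂ t t := by
    rw [P.hsInner_otimes b₁ b₂ b hC₁ hC₁ (ht.smul b₂ _) (ht.smul b₂ _), hsInner_smul_right_s9,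
      hsInner_comm_s9 b₂ (n⁻¹ • t), hsInner_smul_right_s9, ← mul_assoc, mul_inv_cancel₀ hn, one_mul]
  rw [hsInner_sub_sub_self b hC (P.isHS_otimes b₁ b₂ b hC₁ (ht.smul b₂ _)), hCE, hEE,
    hsNorm_sq_s9, hsNorm_sq_s9, hsNorm_sq_s9]
  ring

end IsT1

/-- `D(C₁) = ‖C‖₂² − ‖T₁(C,C₁)‖₂²/‖C₁‖₂²` vanishes iff `C = C₁ ⊗̃ C₂`
for some `C₂ ∈ S₂(H₂)`. -/
theorem stmt9 (P : HilbertTensorProduct H₁ H₂ H)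
    (b₁ : HilbertBasis ι₁ ℝ H₁) (b₂ : HilbertBasis ι₂ ℝ H₂) (b : HilbertBasis κ ℝ H)
    (T₁ : (H →L[ℝ] H) → (H₁ →L[ℝ] H₁) → (H₂ →L[ℝ] H₂))
    (hT₁ : IsT1 P b₁ b₂ b T₁)
    (C : H →L[ℝ] H) (C₁ : H₁ →L[ℝ] H₁) (hC : IsHS b C) (hC₁ : IsHS b₁ C₁)
    (hC₁ne : C₁ ≠ 0) :
    hsNorm b C ^ 2 - hsNorm b₂ (T₁ C C₁) ^ 2 / hsNorm b₁ C₁ ^ 2 = 0 ↔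
      ∃ C₂ : H₂ →L[ℝ] H₂, IsHS b₂ C₂ ∧ C = P.otimes C₁ C₂ := by
  have hT : IsHS b₂ ((hsInner b₁ C₁ C₁)⁻¹ • T₁ C C₁) := (hT₁.1 C C₁ hC hC₁).smul b₂ _
  rw [hT₁.hsNorm_sq_sub_div_hsNorm_sq hC hC₁ hC₁ne,
    hsInner_self_eq_zero b (hC.sub_s9 b (P.isHS_otimes b₁ b₂ b hC₁ hT)), sub_eq_zero]
  constructor
  · exact fun hCE => ⟨_, hT, hCE⟩
  · rintro ⟨C₂, hC₂, rfl⟩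
    rw [hT₁.apply_otimes hC₁ hC₂ hC₁, smul_smul,
      inv_mul_cancel₀ (hsInner_self_pos b₁ hC₁ hC₁ne).ne', one_smul]
end
end
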